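/- Let X be the signature of a tree-reduced path γ : [0,1] → ℝ^d of length L, parametrized at unit speed and starting at the origin. Suppose (γ̂^{(N)}) is a sequence of paths starting at the origin, parametrized at constant speed, each of length at most L, such that for each n, X^n(γ̂^{(N)}) → X^n(γ) as N → ∞. Then γ̂^{(N)} converges uniformly to γ on [0,1]. -/

import Mathlib

open scoped ENNReal Classical

/-- The approximation to the signature coefficient of the word `w` of the path
`γ : [s,t] → ℝ^d` given by the iterated Riemann–Stieltjes sum along the dyadic partition
of `[s,t]` of mesh `(t-s)/2^m`. -/
noncomputable def dyadicSigSum (d : ℕ) (γ : ℝ → PiLp 1 fun _ : Fin d => ℝ) (s t : ℝ)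
    {n : ℕ} (w : Fin n → Fin d) (m : ℕ) : ℝ :=
  ∑ j ∈ Finset.univ.filter (fun j : Fin n → Fin (2 ^ m) => StrictMono j),
    ∏ i : Fin n,
      (γ (s + (t - s) * ((j i : ℝ) + 1) / 2 ^ m) (w i) -
       γ (s + (t - s) * (j i : ℝ) / 2 ^ m) (w i))

/-- The signature coefficient `C_{s,t}(w) = ∫_{s<u₁<⋯<uₙ<t} dγ_{w₁}(u₁)⋯dγ_{wₙ}(uₙ)` of
the word `w`, defined as the limit of iterated Riemann–Stieltjes sums along dyadic
partitions (for continuous paths of bounded variation this limit exists and is the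
iterated integral over the simplex). -/
noncomputable def sigCoeff (d : ℕ) (γ : ℝ → PiLp 1 fun _ : Fin d => ℝ) (s t : ℝ)
    {n : ℕ} (w : Fin n → Fin d) : ℝ :=
  Filter.limUnder Filter.atTop (dyadicSigSum d γ s t w)

/-- The degree-`n` signature term `X^n_{s,t}(γ) ∈ (ℝ^d)^{⊗n}`, recorded by its coordinates
in the basis of words of length `n`, and normed with the `ℓ¹` norm of the coordinates:
for the `ℓ¹` norm on `ℝ^d` this is exactly the projective tensor norm on `(ℝ^d)^{⊗n}`. -/
noncomputable def sig (d : ℕ) (γ : ℝ → PiLp 1 fun _ : Fin d => ℝ) (s t : ℝ) (n : ℕ) :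
    PiLp 1 fun _ : Fin n → Fin d => ℝ :=
  WithLp.toLp 1 (fun w => sigCoeff d γ s t w)

/-!
A sequence of paths of length at most `L` from the origin, run at constant speed, is uniformly
`L`-Lipschitz, so by Arzelà–Ascoli every subsequence has a further subsequence converging
uniformly to some path `σ`. The variation is lower semicontinuous, so `σ` again has length at
most `L` at speed at most `L`. Iterated dyadic Riemann sums of `L`-Lipschitz paths converge to
the signature at the rate `n² (L (t - s))ⁿ 2⁻ᵐ`, uniformly in the path, so signature terms pass
to uniform limits and `σ` has the signature of `γ`. Tree-reducedness of `γ` then forces `σ = γ`: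
every subsequence has a further subsequence converging to `γ`.
-/

open Filter Set Finset Topology
open scoped NNReal

theorem tendstoUniformlyOn_of_forall_subseq {ι α β : Type*} [UniformSpace β] {l : Filter ι}
    [l.IsCountablyGenerated] {F : ι → α → β} {f : α → β} {s : Set α}
    (h : ∀ ns : ℕ → ι, Tendsto ns atTop l →
      ∃ ms : ℕ → ℕ, TendstoUniformlyOn (fun k => F (ns (ms k))) f atTop s) :
    TendstoUniformlyOn F f l s := by
  suffices Tendsto (fun i => UniformOnFun.ofFun {s} (F i)) l (𝓝 (UniformOnFun.ofFun {s} f)) by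
    exact UniformOnFun.tendsto_iff_tendstoUniformlyOn.1 this s rfl
  refine tendsto_of_subseq_tendsto fun ns hns => ?_
  obtain ⟨ms, hms⟩ := h ns hns
  exact ⟨ms, UniformOnFun.tendsto_iff_tendstoUniformlyOn.2 fun t ht => ht ▸ hms⟩

section Variation

variable {E : Type*} [PseudoEMetricSpace E]

theorem eVariationOn_le_of_tendsto {α ι : Type*} [LinearOrder α] {p : Filter ι} [p.NeBot]
    {F : ι → α → E} {f : α → E} {s : Set α}
    (hF : ∀ x ∈ s, Tendsto (fun i => F i x) p (𝓝 (f x))) {c : ℝ≥0∞}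
    (hc : ∀ᶠ i in p, eVariationOn (F i) s ≤ c) : eVariationOn f s ≤ c := by
  by_contra! hlt
  obtain ⟨i, hi, hic⟩ := ((eVariationOn.lowerSemicontinuous_aux hF hlt).and hc).exists
  exact hi.not_ge hic

theorem lipschitzOnWith_of_eVariationOn_Icc_le {f : ℝ → E} {a b L : ℝ}
    (h : ∀ s t : ℝ, a ≤ s → s ≤ t → t ≤ b →
      eVariationOn f (Icc s t) ≤ ENNReal.ofReal (L * (t - s))) :
    LipschitzOnWith L.toNNReal f (Icc a b) := by
  have key : ∀ x ∈ Icc a b, ∀ y ∈ Icc a b, x ≤ y →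
      edist (f x) (f y) ≤ L.toNNReal * edist x y := fun x hx y hy hxy =>
    calc edist (f x) (f y) ≤ eVariationOn f (Icc x y) :=
          eVariationOn.edist_le f (left_mem_Icc.2 hxy) (right_mem_Icc.2 hxy)
      _ ≤ ENNReal.ofReal (L * (y - x)) := h x y hx.1 hxy hy.2
      _ ≤ ENNReal.ofReal (L.toNNReal * (y - x)) :=
          ENNReal.ofReal_le_ofReal (mul_le_mul_of_nonneg_right (Real.le_coe_toNNReal L)
            (sub_nonneg.2 hxy))
      _ = L.toNNReal * edist x y := by
          rw [ENNReal.ofReal_mul NNReal.zero_le_coe, ENNReal.ofReal_coe_nnreal, edist_comm,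
            edist_dist, Real.dist_eq, abs_of_nonneg (sub_nonneg.2 hxy)]
  intro x hx y hy
  rcases le_total x y with hxy | hyx
  · exact key x hx y hy hxy
  · rw [edist_comm, edist_comm x]
    exact key y hy x hx hyx

end Variation

section ArzelaAscoli

variable {E : Type*} [MetricSpace E] [ProperSpace E]

theorem isCompact_setOf_lipschitzWith_apply_eq {X : Type*} [PseudoMetricSpace X] (K : ℝ≥0)
    (x₀ : X) (e : E) : IsCompact {f : C(X, E) | LipschitzWith K f ∧ f x₀ = e} := by
  set T : Set (X → E) := {g | LipschitzWith K g ∧ g x₀ = e}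
  have himage : ContinuousMap.toFun '' {f : C(X, E) | LipschitzWith K f ∧ f x₀ = e} = T := by
    ext g
    refine ⟨fun ⟨f, hf, hfg⟩ => hfg ▸ hf, fun hg => ⟨⟨g, hg.1.continuous⟩, hg, rfl⟩⟩
  have hT_closed : IsClosed T :=
    (isClosed_setOfPred_lipschitzWith K).inter (isClosed_eq (continuous_apply x₀) continuous_const)
  have hT_bounded : T ⊆ univ.pi fun x => Metric.closedBall e (K * dist x x₀) :=
    fun g hg x _ => hg.2 ▸ hg.1.dist_le_mul x x₀
  refine ArzelaAscoli.isCompact_of_equicontinuous _ ?_ ?_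
  · rw [himage]
    exact (isCompact_univ_pi fun x => isCompact_closedBall e _).of_isClosed_subset hT_closed
      hT_bounded
  · exact (LipschitzWith.uniformEquicontinuous _ K fun f => f.2.1).equicontinuous

theorem exists_subseq_tendstoUniformlyOn_of_lipschitzOnWith {K : ℝ≥0} {a b : ℝ} (hab : a ≤ b)
    {e : E} {F : ℕ → ℝ → E} (hF : ∀ k, LipschitzOnWith K (F k) (Icc a b))
    (hFa : ∀ k, F k a = e) :
    ∃ σ : ℝ → E, ∃ φ : ℕ → ℕ, StrictMono φ ∧ LipschitzWith K σ ∧ σ a = e ∧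
      TendstoUniformlyOn (fun k => F (φ k)) σ atTop (Icc a b) := by
  let x₀ : Icc a b := ⟨a, left_mem_Icc.2 hab⟩
  let G : ℕ → C(Icc a b, E) := fun k => ⟨fun x => F k x, (hF k).to_restrict.continuous⟩
  have hG : ∀ k, G k ∈ {f : C(Icc a b, E) | LipschitzWith K f ∧ f x₀ = e} :=
    fun k => ⟨(hF k).to_restrict, hFa k⟩
  obtain ⟨g, ⟨hg, hgx₀⟩, φ, hφ, hGg⟩ :=
    (isCompact_setOf_lipschitzWith_apply_eq K x₀ e).tendsto_subseq hG
  refine ⟨g ∘ projIcc a b hab, φ, hφ, by simpa using hg.comp (LipschitzWith.projIcc hab), ?_, ?_⟩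
  · simpa [projIcc_left] using hgx₀
  · have hσ : (g ∘ projIcc a b hab) ∘ Subtype.val = g :=
      funext fun x => congrArg g (projIcc_val hab x)
    rw [tendstoUniformlyOn_iff_tendstoUniformly_comp_coe, hσ]
    exact ContinuousMap.tendsto_iff_tendstoUniformly.1 hGg

end ArzelaAscoli

section DyadicSums

/-- Expanding the product picks one of the two halves `2 j i`, `2 j i + 1` of each coarse cell;
the fine tuples obtained are exactly those whose coarse cells `k i / 2` strictly increase. -/
theorem sum_strictMono_prod_add {R : Type*} [CommSemiring R] {n M : ℕ} (g : Fin n → ℕ → R) :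
    ∑ j ∈ univ.filter (fun j : Fin n → Fin M => StrictMono j),
        ∏ i, (g i (2 * j i) + g i (2 * j i + 1)) =
      ∑ k ∈ univ.filter (fun k : Fin n → Fin (M * 2) => StrictMono fun i => (k i : ℕ) / 2),
        ∏ i, g i (k i) := by
  let e : (Fin n → Fin M) × (Fin n → Fin 2) ≃ (Fin n → Fin (M * 2)) :=
    (Equiv.arrowProdEquivProdArrow _ _ _).symm.trans
      (Equiv.arrowCongr (Equiv.refl _) finProdFinEquiv)
  have he : ∀ p i, (e p i : ℕ) = p.2 i + 2 * p.1 i := fun p i => finProdFinEquiv_apply_val _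
  rw [Finset.sum_filter, Finset.sum_filter]
  calc ∑ j : Fin n → Fin M, (if StrictMono j then ∏ i, (g i (2 * j i) + g i (2 * j i + 1)) else 0)
      = ∑ j : Fin n → Fin M, ∑ c : Fin n → Fin 2,
          if StrictMono j then ∏ i, g i (2 * j i + c i) else 0 := by
        refine Fintype.sum_congr _ _ fun j => ?_
        split_ifs
        · rw [← Fintype.prod_sum fun i (c : Fin 2) => g i (2 * j i + c)]
          simp [Fin.sum_univ_two]
        · simp
    _ = ∑ p : (Fin n → Fin M) × (Fin n → Fin 2),
          if StrictMono p.1 then ∏ i, g i (2 * p.1 i + p.2 i) else 0 :=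
        (Fintype.sum_prod_type' _).symm
    _ = _ := by
        refine Fintype.sum_equiv e _ _ fun p => ?_
        have hhalf : (fun i => (e p i : ℕ) / 2) = fun i => (p.1 i : ℕ) :=
          funext fun i => by rw [he]; omega
        have hval : ∀ i, (e p i : ℕ) = 2 * p.1 i + p.2 i := fun i => by rw [he, add_comm]
        simp only [hhalf]
        exact if_congr Iff.rfl (by simp only [hval]) rfl

theorem card_filter_apply_eq_succ_le {n M : ℕ} {x y : Fin n} (hxy : x ≠ y) :
    #(univ.filter fun k : Fin n → Fin M => (k y : ℕ) = k x + 1) ≤ M ^ (n - 1) := by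
  calc #(univ.filter fun k : Fin n → Fin M => (k y : ℕ) = k x + 1)
      ≤ #(univ : Finset ({i // i ≠ y} → Fin M)) := by
        refine card_le_card_of_injOn (fun k i => k i) (fun _ _ => mem_coe.2 (mem_univ _)) ?_
        intro k hk k' hk' hkk'
        rw [mem_coe, Finset.mem_filter] at hk hk'
        funext i
        by_cases hi : i = y
        · subst hi
          exact Fin.ext (by rw [hk.2, hk'.2, show k x = k' x from congrFun hkk' ⟨x, hxy⟩])
        · exact congrFun hkk' ⟨i, hi⟩
    _ = M ^ (n - 1) := by simp

theorem card_strictMono_sdiff_strictMono_half_le {n M : ℕ} :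
    #((univ.filter fun k : Fin n → Fin M => StrictMono k) \
        univ.filter fun k => StrictMono fun i => (k i : ℕ) / 2) ≤ n ^ 2 * M ^ (n - 1) := by
  let offDiag := univ.filter fun p : Fin n × Fin n => p.1 ≠ p.2
  let adjacentAt := fun p : Fin n × Fin n =>
    univ.filter fun k : Fin n → Fin M => (k p.2 : ℕ) = k p.1 + 1
  calc _ ≤ #(offDiag.biUnion adjacentAt) := by
        refine card_le_card fun k hk => ?_
        obtain ⟨hmono, hhalf⟩ := Finset.mem_sdiff.1 hk
        have hhalf : ¬StrictMono fun i => (k i : ℕ) / 2 :=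
          fun h => hhalf (Finset.mem_filter.2 ⟨Finset.mem_univ _, h⟩)
        rw [StrictMono] at hhalf
        push Not at hhalf
        obtain ⟨x, y, hxy, hle⟩ := hhalf
        have hlt : (k x : ℕ) < k y := (Finset.mem_filter.1 hmono).2 hxy
        simp only [offDiag, adjacentAt, Finset.mem_biUnion, Finset.mem_filter, Finset.mem_univ,
          true_and]
        exact ⟨(x, y), hxy.ne, show (k y : ℕ) = k x + 1 by omega⟩
    _ ≤ ∑ p ∈ offDiag, #(adjacentAt p) := card_biUnion_le
    _ ≤ #offDiag • M ^ (n - 1) :=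
        sum_le_card_nsmul _ _ _ fun p hp => card_filter_apply_eq_succ_le (mem_filter.1 hp).2
    _ ≤ n ^ 2 * M ^ (n - 1) := by
        rw [smul_eq_mul]
        gcongr
        exact (card_filter_le _ _).trans (by simp [sq])

end DyadicSums

section Signature

variable {d : ℕ} {γ : ℝ → PiLp 1 fun _ : Fin d => ℝ} {s t : ℝ} {K : ℝ≥0}

noncomputable def dyadicIncrement (γ : ℝ → PiLp 1 fun _ : Fin d => ℝ) (s t : ℝ) (m : ℕ)
    (a : Fin d) (q : ℕ) : ℝ :=
  γ (s + (t - s) * ((q : ℝ) + 1) / 2 ^ m) a - γ (s + (t - s) * (q : ℝ) / 2 ^ m) a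

theorem dyadicSigSum_eq_sum_prod_dyadicIncrement {n : ℕ} (w : Fin n → Fin d) (m : ℕ) :
    dyadicSigSum d γ s t w m =
      ∑ j ∈ univ.filter (fun j : Fin n → Fin (2 ^ m) => StrictMono j),
        ∏ i, dyadicIncrement γ s t m (w i) (j i) :=
  rfl

theorem dyadicIncrement_eq_add (m : ℕ) (a : Fin d) (q : ℕ) :
    dyadicIncrement γ s t m a q =
      dyadicIncrement γ s t (m + 1) a (2 * q) + dyadicIncrement γ s t (m + 1) a (2 * q + 1) := by
  have hpt : ∀ r : ℝ, s + (t - s) * (2 * r) / 2 ^ (m + 1) = s + (t - s) * r / 2 ^ m :=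
    fun r => by rw [pow_succ]; field_simp
  simp only [dyadicIncrement]
  push_cast
  rw [show (2 : ℝ) * q + 1 + 1 = 2 * (q + 1) by ring, hpt, hpt]
  ring

theorem dyadicPoint_mem_Icc (hst : s ≤ t) {m q : ℕ} (hq : q ≤ 2 ^ m) :
    s + (t - s) * (q : ℝ) / 2 ^ m ∈ Icc s t := by
  have h0 : 0 ≤ (q : ℝ) / 2 ^ m := by positivity
  have h1 : (q : ℝ) / 2 ^ m ≤ 1 := div_le_one_of_le₀ (by exact_mod_cast hq) (by positivity)
  rw [mul_div_assoc]
  constructor <;> nlinarith [sub_nonneg.2 hst]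

theorem abs_dyadicIncrement_le (hγ : LipschitzOnWith K γ (Icc s t)) (hst : s ≤ t) {m q : ℕ}
    (hq : q < 2 ^ m) (a : Fin d) : |dyadicIncrement γ s t m a q| ≤ K * (t - s) / 2 ^ m := by
  have hright := dyadicPoint_mem_Icc hst (Nat.succ_le_of_lt hq)
  push_cast at hright
  have hlen : s + (t - s) * ((q : ℝ) + 1) / 2 ^ m - (s + (t - s) * q / 2 ^ m) = (t - s) / 2 ^ m :=
    by ring
  calc |dyadicIncrement γ s t m a q|
      = dist (γ (s + (t - s) * ((q : ℝ) + 1) / 2 ^ m) a) (γ (s + (t - s) * q / 2 ^ m) a) :=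
        (Real.dist_eq _ _).symm
    _ ≤ dist (γ (s + (t - s) * ((q : ℝ) + 1) / 2 ^ m)) (γ (s + (t - s) * q / 2 ^ m)) :=
        PiLp.dist_apply_le _ _ a
    _ ≤ K * dist (s + (t - s) * ((q : ℝ) + 1) / 2 ^ m) (s + (t - s) * q / 2 ^ m) :=
        hγ.dist_le_mul _ hright _ (dyadicPoint_mem_Icc hst hq.le)
    _ = K * (t - s) / 2 ^ m := by
        rw [Real.dist_eq, hlen, abs_of_nonneg (div_nonneg (sub_nonneg.2 hst) (by positivity)),
          mul_div_assoc]

theorem dyadicSigSum_eq_sum_strictMono_half {n : ℕ} (w : Fin n → Fin d) (m : ℕ) :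
    dyadicSigSum d γ s t w m =
      ∑ k ∈ univ.filter (fun k : Fin n → Fin (2 ^ (m + 1)) => StrictMono fun i => (k i : ℕ) / 2),
        ∏ i, dyadicIncrement γ s t (m + 1) (w i) (k i) := by
  rw [dyadicSigSum_eq_sum_prod_dyadicIncrement]
  calc _ = ∑ j ∈ univ.filter (fun j : Fin n → Fin (2 ^ m) => StrictMono j),
        ∏ i, (dyadicIncrement γ s t (m + 1) (w i) (2 * j i) +
          dyadicIncrement γ s t (m + 1) (w i) (2 * j i + 1)) :=
        sum_congr rfl fun j _ => prod_congr rfl fun i _ => dyadicIncrement_eq_add m (w i) (j i)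
    -- `2 ^ (m + 1)` unfolds to `2 ^ m * 2`
    _ = _ := sum_strictMono_prod_add fun i q => dyadicIncrement γ s t (m + 1) (w i) q

/-- The two sums differ by the strictly increasing fine tuples with two entries in one coarse cell:
at most `n² Mⁿ⁻¹` of them for `M = 2ᵐ⁺¹` fine cells, each term at most `(K (t - s) / M)ⁿ`. -/
theorem abs_dyadicSigSum_succ_sub_le (hγ : LipschitzOnWith K γ (Icc s t)) (hst : s ≤ t) {n : ℕ}
    (w : Fin n → Fin d) (m : ℕ) :
    |dyadicSigSum d γ s t w (m + 1) - dyadicSigSum d γ s t w m| ≤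
      n ^ 2 * (K * (t - s)) ^ n / 2 / 2 ^ m := by
  set M := 2 ^ (m + 1)
  set strict := univ.filter fun k : Fin n → Fin M => StrictMono k
  set halfStrict := univ.filter fun k : Fin n → Fin M => StrictMono fun i => (k i : ℕ) / 2
  have hsub : halfStrict ⊆ strict :=
    monotone_filter_right _ fun k _ hk _ _ hxy => Nat.lt_of_div_lt_div (hk hxy)
  rw [dyadicSigSum_eq_sum_prod_dyadicIncrement, dyadicSigSum_eq_sum_strictMono_half,
    ← sum_sdiff hsub, add_sub_cancel_right]
  have hterm : ∀ k : Fin n → Fin M,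
      |∏ i, dyadicIncrement γ s t (m + 1) (w i) (k i)| ≤ (K * (t - s) / M) ^ n := fun k => by
    rw [abs_prod]
    refine (prod_le_prod (fun _ _ => abs_nonneg _)
      fun i _ => abs_dyadicIncrement_le hγ hst (k i).isLt (w i)).trans_eq ?_
    simp [M, div_pow]
  calc |∑ k ∈ strict \ halfStrict, ∏ i, dyadicIncrement γ s t (m + 1) (w i) (k i)|
      ≤ #(strict \ halfStrict) • (K * (t - s) / M) ^ n :=
        (abs_sum_le_sum_abs _ _).trans (sum_le_card_nsmul _ _ _ fun k _ => hterm k)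
    _ ≤ ((n ^ 2 * M ^ (n - 1) : ℕ) : ℝ) * (K * (t - s) / M) ^ n := by
        rw [nsmul_eq_mul]
        gcongr
        exact_mod_cast card_strictMono_sdiff_strictMono_half_le
    _ = n ^ 2 * (K * (t - s)) ^ n / 2 / 2 ^ m := by
        rcases n with _ | n
        · simp
        · simp only [M]
          push_cast
          rw [div_pow]
          field_simp
          ring

theorem dist_dyadicSigSum_sigCoeff_le (hγ : LipschitzOnWith K γ (Icc s t)) (hst : s ≤ t)
    {n : ℕ} (w : Fin n → Fin d) (m : ℕ) :
    dist (dyadicSigSum d γ s t w m) (sigCoeff d γ s t w) ≤ n ^ 2 * (K * (t - s)) ^ n / 2 ^ m := by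
  have hstep : ∀ m, dist (dyadicSigSum d γ s t w m) (dyadicSigSum d γ s t w (m + 1)) ≤
      n ^ 2 * (K * (t - s)) ^ n / 2 / 2 ^ m := fun m => by
    rw [dist_comm, Real.dist_eq]
    exact abs_dyadicSigSum_succ_sub_le hγ hst w m
  obtain ⟨c, hc⟩ := cauchySeq_tendsto_of_complete (cauchySeq_of_le_geometric_two hstep)
  rw [sigCoeff, hc.limUnder_eq]
  exact dist_le_of_le_geometric_two_of_tendsto hstep hc m

theorem tendsto_dyadicSigSum_sigCoeff (hγ : LipschitzOnWith K γ (Icc s t)) (hst : s ≤ t)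
    {n : ℕ} (w : Fin n → Fin d) :
    Tendsto (dyadicSigSum d γ s t w) atTop (𝓝 (sigCoeff d γ s t w)) :=
  tendsto_iff_dist_tendsto_zero.2 <| squeeze_zero (fun _ => dist_nonneg)
    (dist_dyadicSigSum_sigCoeff_le hγ hst w)
    (tendsto_const_nhds.div_atTop (tendsto_pow_atTop_atTop_of_one_lt one_lt_two))

theorem tendsto_dyadicSigSum_of_tendsto {ι : Type*} {p : Filter ι}
    {F : ι → ℝ → PiLp 1 fun _ : Fin d => ℝ} (hst : s ≤ t)
    (hF : ∀ u ∈ Icc s t, Tendsto (fun k => F k u) p (𝓝 (γ u))) {n : ℕ} (w : Fin n → Fin d)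
    (m : ℕ) :
    Tendsto (fun k => dyadicSigSum d (F k) s t w m) p (𝓝 (dyadicSigSum d γ s t w m)) := by
  have hcoord : ∀ {q : ℕ}, q ≤ 2 ^ m → ∀ a : Fin d,
      Tendsto (fun k => F k (s + (t - s) * (q : ℝ) / 2 ^ m) a) p
        (𝓝 (γ (s + (t - s) * (q : ℝ) / 2 ^ m) a)) := fun hq a =>
    ((PiLp.continuous_apply 1 _ a).tendsto _).comp (hF _ (dyadicPoint_mem_Icc hst hq))
  refine tendsto_finsetSum _ fun j _ => tendsto_finsetProd _ fun i _ => ?_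
  have hright := hcoord (Nat.succ_le_of_lt (j i).isLt) (w i)
  push_cast at hright
  exact hright.sub (hcoord (j i).isLt.le (w i))

theorem tendsto_sigCoeff_of_tendstoUniformlyOn {ι : Type*} {p : Filter ι}
    {F : ι → ℝ → PiLp 1 fun _ : Fin d => ℝ} (hF : ∀ k, LipschitzOnWith K (F k) (Icc s t))
    (hγ : LipschitzOnWith K γ (Icc s t)) (hst : s ≤ t) (hFγ : TendstoUniformlyOn F γ p (Icc s t))
    {n : ℕ} (w : Fin n → Fin d) :
    Tendsto (fun k => sigCoeff d (F k) s t w) p (𝓝 (sigCoeff d γ s t w)) := by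
  -- Moore–Osgood: the dyadic sums converge to the signature uniformly in the path.
  refine TendstoUniformly.tendsto_of_eventually_tendsto
    (F := fun m k => dyadicSigSum d (F k) s t w m) ?_
    (Eventually.of_forall fun m => tendsto_dyadicSigSum_of_tendsto hst
      (fun u hu => hFγ.tendsto_at hu) w m)
    (tendsto_dyadicSigSum_sigCoeff hγ hst w)
  have hrate : Tendsto (fun m : ℕ => (n : ℝ) ^ 2 * (K * (t - s)) ^ n / 2 ^ m) atTop (𝓝 0) :=
    tendsto_const_nhds.div_atTop (tendsto_pow_atTop_atTop_of_one_lt one_lt_two)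
  rw [Metric.tendstoUniformly_iff]
  intro ε hε
  filter_upwards [hrate.eventually (gt_mem_nhds hε)] with m hm k
  rw [dist_comm]
  exact (dist_dyadicSigSum_sigCoeff_le (hF k) hst w m).trans_lt hm

theorem tendsto_sig_of_tendstoUniformlyOn {ι : Type*} {p : Filter ι}
    {F : ι → ℝ → PiLp 1 fun _ : Fin d => ℝ} (hF : ∀ k, LipschitzOnWith K (F k) (Icc s t))
    (hγ : LipschitzOnWith K γ (Icc s t)) (hst : s ≤ t) (hFγ : TendstoUniformlyOn F γ p (Icc s t))
    (n : ℕ) : Tendsto (fun k => sig d (F k) s t n) p (𝓝 (sig d γ s t n)) :=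
  ((PiLp.continuous_toLp 1 _).tendsto _).comp
    (tendsto_pi_nhds.2 fun w => tendsto_sigCoeff_of_tendstoUniformlyOn hF hγ hst hFγ w)

end Signature

/-- `htreeReduced` is the Hambly–Lyons uniqueness theorem for the tree-reduced path `γ`: among
paths from the origin run at speed at most `L`, it is determined by its signature. -/
theorem signature_inversion_uniform_limit_general (d : ℕ)
    (γ : ℝ → PiLp 1 fun _ : Fin d => ℝ) (L : ℝ)
    (htreeReduced : ∀ σ : ℝ → PiLp 1 fun _ : Fin d => ℝ,
      ContinuousOn σ (Set.Icc 0 1) → σ 0 = 0 →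
      (∀ s t : ℝ, 0 ≤ s → s ≤ t → t ≤ 1 →
        eVariationOn σ (Set.Icc s t) ≤ ENNReal.ofReal (L * (t - s))) →
      (∀ n : ℕ, sig d σ 0 1 n = sig d γ 0 1 n) →
      Set.EqOn σ γ (Set.Icc 0 1))
    (γhat : ℕ → ℝ → PiLp 1 fun _ : Fin d => ℝ)
    (hhat0 : ∀ N, γhat N 0 = 0)
    (hhatspeed : ∀ N, ∀ s t : ℝ, 0 ≤ s → s ≤ t → t ≤ 1 →
      eVariationOn (γhat N) (Set.Icc s t) ≤ ENNReal.ofReal (L * (t - s)))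
    (hsig : ∀ n : ℕ, Filter.Tendsto (fun N => sig d (γhat N) 0 1 n)
      Filter.atTop (nhds (sig d γ 0 1 n))) :
    TendstoUniformlyOn (fun N t => γhat N t) γ Filter.atTop (Set.Icc 0 1) := by
  have hlip : ∀ N, LipschitzOnWith L.toNNReal (γhat N) (Icc 0 1) :=
    fun N => lipschitzOnWith_of_eVariationOn_Icc_le (hhatspeed N)
  refine tendstoUniformlyOn_of_forall_subseq fun ns hns => ?_
  obtain ⟨σ, φ, hφ, hσlip, hσ0, hconv⟩ :=
    exists_subseq_tendstoUniformlyOn_of_lipschitzOnWith zero_le_one (fun k => hlip (ns k))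
      fun k => hhat0 (ns k)
  have hσspeed : ∀ s t : ℝ, 0 ≤ s → s ≤ t → t ≤ 1 →
      eVariationOn σ (Icc s t) ≤ ENNReal.ofReal (L * (t - s)) := fun s t hs hst ht =>
    eVariationOn_le_of_tendsto (fun u hu => hconv.tendsto_at (Icc_subset_Icc hs ht hu))
      (Eventually.of_forall fun k => hhatspeed (ns (φ k)) s t hs hst ht)
  have hσsig : ∀ n, sig d σ 0 1 n = sig d γ 0 1 n := fun n =>
    tendsto_nhds_unique
      (tendsto_sig_of_tendstoUniformlyOn (fun k => hlip _) hσlip.lipschitzOnWith zero_le_one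
        hconv n)
      ((hsig n).comp (hns.comp hφ.tendsto_atTop))
  exact ⟨φ, hconv.congr_right
    (htreeReduced σ hσlip.continuous.continuousOn hσ0 hσspeed hσsig)⟩

/-- Inversion of the signature: let `γ : [0,1] → ℝ^d` be a tree-reduced path of length
`L`, parametrized at unit speed and starting at the origin (tree-reducedness, via the
uniqueness theorem of Hambly–Lyons, is expressed by saying that any path starting at the
origin, of length at most `L`, Lipschitz with constant `L`, with the same signature as
`γ`, coincides with `γ` on `[0,1]`). If `(γ̂^{(N)})` is a sequence of paths starting
at the origin, Lipschitz with constant `L` (i.e. of length at most `L` parametrized at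
constant speed), whose signatures converge term by term to that of `γ`, then `γ̂^{(N)}`
converges uniformly to `γ` on `[0,1]`. -/
theorem signature_inversion_uniform_limit (d : ℕ)
    (γ : ℝ → PiLp 1 fun _ : Fin d => ℝ) (L : ℝ) (hL0 : 0 ≤ L)
    (hγcont : ContinuousOn γ (Set.Icc 0 1)) (hγ0 : γ 0 = 0)
    (hγspeed : ∀ s t : ℝ, 0 ≤ s → s ≤ t → t ≤ 1 →
      eVariationOn γ (Set.Icc s t) = ENNReal.ofReal (L * (t - s)))
    (htreeReduced : ∀ σ : ℝ → PiLp 1 fun _ : Fin d => ℝ,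
      ContinuousOn σ (Set.Icc 0 1) → σ 0 = 0 →
      (∀ s t : ℝ, 0 ≤ s → s ≤ t → t ≤ 1 →
        eVariationOn σ (Set.Icc s t) ≤ ENNReal.ofReal (L * (t - s))) →
      (∀ n : ℕ, sig d σ 0 1 n = sig d γ 0 1 n) →
      Set.EqOn σ γ (Set.Icc 0 1))
    (γhat : ℕ → ℝ → PiLp 1 fun _ : Fin d => ℝ)
    (hhatcont : ∀ N, ContinuousOn (γhat N) (Set.Icc 0 1))
    (hhat0 : ∀ N, γhat N 0 = 0)
    (hhatspeed : ∀ N, ∀ s t : ℝ, 0 ≤ s → s ≤ t → t ≤ 1 →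
      eVariationOn (γhat N) (Set.Icc s t) ≤ ENNReal.ofReal (L * (t - s)))
    (hsig : ∀ n : ℕ, Filter.Tendsto (fun N => sig d (γhat N) 0 1 n)
      Filter.atTop (nhds (sig d γ 0 1 n))) :
    TendstoUniformlyOn (fun N t => γhat N t) γ Filter.atTop (Set.Icc 0 1) :=
  signature_inversion_uniform_limit_general d γ L htreeReduced γhat hhat0 hhatspeed hsig
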